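/- Let n ≥ 1 and let f be in 𝒜_n with Re(f(z)/z) > 0 for all z ∈ 𝔻 with z ≠ 0 (i.e. f ∈ S_n). Then for every z with 0 < |z| < R, where R := (arcsinh(1)/(n + √(n² + (arcsinh(1))²)))^(1/n) and arcsinh(1) = Real.arsinh 1, one has f(z) ≠ 0 and z·f'(z)/f(z) ∈ Ω_ρ. -/

import Mathlib

open Complex

/-- Principal branch of the complex inverse hyperbolic sine. -/
noncomputable def carcsinh (z : ℂ) : ℂ := Complex.log (z + (1 + z ^ 2) ^ ((1 : ℂ) / 2))

/-- The function `ρ(z) = 1 + arcsinh z`. -/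
noncomputable def ρ (z : ℂ) : ℂ := 1 + carcsinh z

/-- The open unit disk in `ℂ`. -/
def unitDisk : Set ℂ := {z : ℂ | ‖z‖ < 1}

/-- The petal-shaped domain `Ω_ρ = ρ '' 𝔻`. -/
noncomputable def OmegaRho : Set ℂ := ρ '' unitDisk

/-- The class `𝒜_n`: analytic normalized functions `f(z) = z + a_{n+1} z^{n+1} + ⋯`. -/
def classA (n : ℕ) (f : ℂ → ℂ) : Prop :=
  AnalyticOnNhd ℂ f unitDisk ∧ f 0 = 0 ∧ deriv f 0 = 1 ∧
    ∀ k : ℕ, 2 ≤ k → k ≤ n → iteratedDeriv k f 0 = 0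

/-!
Write `f z = z p(z)` with `p = 1 + zⁿ φ`. Since `Re p > 0`, the Schwarz function
`ω = (p - 1) / (p + 1)` maps `𝔻` into `𝔻` and equals `zⁿ ψ`; by the maximum modulus principle
`‖ψ‖ ≤ 1`. From `p = (1 + ω) / (1 - ω)` we get `z p'/p = 2 z ω' / (1 - ω²)`, and the Schwarz–Pick
bound `‖ψ'‖ (1 - r²) ≤ 1 - ‖ψ‖²` turns this into `‖z f'/f - 1‖ = ‖z p'/p‖ ≤ 2 n rⁿ / (1 - r²ⁿ)`
for `‖z‖ = r`. This is `< arsinh 1` exactly when `rⁿ` is below the positive root of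
`arsinh 1 · s² + 2 n s = arsinh 1`, which is `Rⁿ`. Finally the disk `‖w - 1‖ < arsinh 1` lies in
`Ω_ρ`: `sinh` maps the disk of radius `arsinh 1` into `𝔻`, and `carcsinh` inverts it there.
-/

open Metric Set Filter Topology Function Finset Real
open scoped ComplexConjugate

lemma Real.arsinh_one_lt_one : Real.arsinh 1 < 1 := by
  simpa [Real.arsinh_sinh] using
    Real.arsinh_strictMono (Real.self_lt_sinh_iff.mpr one_pos)

lemma Complex.norm_sinh_le (w : ℂ) : ‖Complex.sinh w‖ ≤ Real.sinh ‖w‖ := by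
  have hnorm (k : ℕ) :
      ‖w ^ (2 * k + 1) / (2 * k + 1).factorial‖ = ‖w‖ ^ (2 * k + 1) / (2 * k + 1).factorial := by
    simp
  have hsum := Real.hasSum_sinh ‖w‖
  rw [← (Complex.hasSum_sinh w).tsum_eq, ← hsum.tsum_eq, ← funext hnorm]
  exact norm_tsum_le_tsum_norm (by simpa only [hnorm] using hsum.summable)

lemma Complex.cosh_re_pos {w : ℂ} (hw : |w.im| < π / 2) : 0 < (Complex.cosh w).re := by
  have hcos : 0 < Real.cos w.im := Real.cos_pos_of_mem_Ioo (abs_lt.mp hw)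
  have h2 : (2 * Complex.cosh w).re = (Real.exp w.re + Real.exp (-w.re)) * Real.cos w.im := by
    rw [Complex.two_cosh]
    simp only [add_re, exp_re, neg_re, neg_im, Real.cos_neg]
    ring
  have : (2 * Complex.cosh w).re = 2 * (Complex.cosh w).re := by simp
  nlinarith [Real.exp_pos w.re, Real.exp_pos (-w.re)]

lemma carcsinh_sinh {w : ℂ} (hw : |w.im| < π / 2) : carcsinh (Complex.sinh w) = w := by
  have hπ := abs_lt.mp hw
  rw [carcsinh, add_comm (1 : ℂ), ← Complex.cosh_sq, one_div,
    Complex.sq_cpow_two_inv (Complex.cosh_re_pos hw), Complex.sinh_add_cosh]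
  exact Complex.log_exp (by linarith [Real.pi_pos]) (by linarith [Real.pi_pos])

lemma one_add_mem_OmegaRho {w : ℂ} (hw : ‖w‖ < Real.arsinh 1) : 1 + w ∈ OmegaRho := by
  have him : |w.im| < π / 2 :=
    calc |w.im| ≤ ‖w‖ := abs_im_le_norm w
      _ < 1 := hw.trans Real.arsinh_one_lt_one
      _ < π / 2 := by linarith [Real.pi_gt_three]
  refine ⟨Complex.sinh w, ?_, by rw [ρ, carcsinh_sinh him]⟩
  calc ‖Complex.sinh w‖ ≤ Real.sinh ‖w‖ := Complex.norm_sinh_le w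
    _ < Real.sinh (Real.arsinh 1) := Real.sinh_lt_sinh.mpr hw
    _ = 1 := Real.sinh_arsinh 1

lemma sum_odd_pow_mul_one_sub_sq (n : ℕ) (r : ℝ) :
    (∑ k ∈ range n, r ^ (2 * k + 1)) * (1 - r ^ 2) = r * (1 - r ^ (2 * n)) := by
  have h := geom_sum_mul (r ^ 2) n
  simp only [pow_succ, pow_mul] at h ⊢
  rw [← Finset.sum_mul]
  linear_combination (-r) * h

lemma two_mul_sum_odd_pow_le {n : ℕ} {r : ℝ} (h0 : 0 ≤ r) (h1 : r ≤ 1) :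
    2 * ∑ k ∈ range n, r ^ (2 * k + 1) ≤ n * (1 + r ^ (2 * n)) := by
  -- pair the `k`-th term with the `(n - 1 - k)`-th: `a + b ≤ 1 + a b` for `a, b ∈ [0, 1]`
  calc 2 * ∑ k ∈ range n, r ^ (2 * k + 1)
      = ∑ k ∈ range n, (r ^ (2 * k + 1) + r ^ (2 * (n - 1 - k) + 1)) := by
        rw [Finset.sum_add_distrib, ← Finset.sum_range_reflect (fun k ↦ r ^ (2 * k + 1)) n]
        ring
    _ ≤ ∑ _k ∈ range n, (1 + r ^ (2 * n)) := by
        refine Finset.sum_le_sum fun k hk ↦ ?_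
        have hprod : r ^ (2 * k + 1) * r ^ (2 * (n - 1 - k) + 1) = r ^ (2 * n) := by
          rw [← pow_add]; congr 1; have := Finset.mem_range.mp hk; omega
        nlinarith [mul_nonneg (sub_nonneg.mpr (pow_le_one₀ h0 h1 (n := 2 * k + 1)))
          (sub_nonneg.mpr (pow_le_one₀ h0 h1 (n := 2 * (n - 1 - k) + 1)))]
    _ = n * (1 + r ^ (2 * n)) := by simp [mul_add]

lemma nat_mul_add_div_le_of_mul_one_sub_sq_le {n : ℕ} (hn : 0 < n) {r t u : ℝ} (hr0 : 0 ≤ r)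
    (hr1 : r < 1) (ht0 : 0 ≤ t) (ht1 : t ≤ 1) (hu : u * (1 - r ^ 2) ≤ 1 - t ^ 2) :
    (n * t + r * u) / (1 - r ^ (2 * n) * t ^ 2) ≤ n / (1 - r ^ (2 * n)) := by
  have hA := sum_odd_pow_mul_one_sub_sq n r
  have hA2 := two_mul_sum_odd_pow_le (n := n) hr0 hr1.le
  set A := ∑ k ∈ range n, r ^ (2 * k + 1)
  have hA0 : 0 ≤ A := Finset.sum_nonneg fun k _ ↦ pow_nonneg hr0 _
  have hr2n : r ^ (2 * n) < 1 := pow_lt_one₀ hr0 hr1 (by omega)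
  have hr2n0 : 0 ≤ r ^ (2 * n) := pow_nonneg hr0 _
  have hd : 0 < 1 - r ^ (2 * n) * t ^ 2 := by nlinarith [pow_le_one₀ ht0 ht1 (n := 2)]
  rw [div_le_div_iff₀ hd (by linarith)]
  have hru : r * u * (1 - r ^ (2 * n)) ≤ A * (1 - t ^ 2) :=
    calc r * u * (1 - r ^ (2 * n)) = A * (u * (1 - r ^ 2)) := by linear_combination (-u) * hA
      _ ≤ A * (1 - t ^ 2) := mul_le_mul_of_nonneg_left hu hA0
  -- `n (1 - r²ⁿ t²) - n t (1 - r²ⁿ) - A (1 - t²)`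
  --   `= (1 - t)² (n - A) + (1 - t) t (n (1 + r²ⁿ) - 2 A)`
  have hq1 : 0 ≤ (1 - t) * (1 - t) * (n - A) := by
    have := sub_nonneg.mpr ht1
    exact mul_nonneg (mul_nonneg this this) (by nlinarith)
  have hq2 : 0 ≤ (1 - t) * t * (n * (1 + r ^ (2 * n)) - 2 * A) :=
    mul_nonneg (mul_nonneg (sub_nonneg.mpr ht1) ht0) (by linarith)
  nlinarith

lemma lt_one_and_two_mul_pow_div_lt {n : ℕ} (hn : 0 < n) {c r : ℝ} (hc : 0 < c) (hr0 : 0 < r)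
    (hr : r < (c / ((n : ℝ) + √((n : ℝ) ^ 2 + c ^ 2))) ^ ((1 : ℝ) / (n : ℝ))) :
    r < 1 ∧ 2 * n * r ^ n / (1 - r ^ (2 * n)) < c := by
  set D := √((n : ℝ) ^ 2 + c ^ 2)
  have hDsq : D ^ 2 = (n : ℝ) ^ 2 + c ^ 2 := Real.sq_sqrt (by positivity)
  have hD0 : 0 < D := Real.sqrt_pos.mpr (by positivity)
  have hn0 : (0 : ℝ) < n := by exact_mod_cast hn
  set S := c / ((n : ℝ) + D)
  have hS0 : 0 < S := by positivity
  have hS1 : S < 1 := by rw [div_lt_one (by positivity)]; nlinarith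
  have hSroot : c * S ^ 2 + 2 * n * S = c := by
    simp only [S]
    field_simp
    linear_combination (-1 : ℝ) * hDsq
  have hrn : r ^ n < S := by
    rw [one_div, Real.lt_rpow_inv_iff_of_pos hr0.le hS0.le hn0, Real.rpow_natCast] at hr
    exact hr
  have hr1 : r < 1 := by
    by_contra! h
    linarith [one_le_pow₀ (n := n) h]
  refine ⟨hr1, ?_⟩
  have hs0 : 0 < r ^ n := pow_pos hr0 n
  rw [div_lt_iff₀ (by rw [pow_mul']; nlinarith), pow_mul']
  nlinarith [mul_lt_mul_of_pos_left hrn (by positivity : (0 : ℝ) < 2 * n),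
    mul_lt_mul_of_pos_left (mul_lt_mul' hrn.le hrn hs0.le hS0) hc]

lemma iterate_dslope_apply_self_eq_zero {𝕜 E : Type*} [NontriviallyNormedField 𝕜] [CharZero 𝕜]
    [NormedAddCommGroup E] [NormedSpace 𝕜 E] [CompleteSpace E]
    {g : 𝕜 → E} {c : 𝕜} (hg : AnalyticAt 𝕜 g c) {n : ℕ}
    (h : ∀ k < n, iteratedDeriv k g c = 0) {k : ℕ} (hk : k < n) :
    (swap dslope c)^[k] g c = 0 := by
  obtain ⟨q, hq⟩ := hg
  have hcoeff : (k.factorial : 𝕜) • q.coeff k = 0 := by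
    obtain ⟨R, hqR⟩ := hq
    rw [← h k hk, iteratedDeriv_eq_iteratedFDeriv, ← hqR.factorial_smul, Nat.cast_smul_eq_nsmul]
    rfl
  rw [← (hq.has_fpower_series_iterate_dslope_fslope k).coeff_zero 1,
    ← FormalMultilinearSeries.coeff, FormalMultilinearSeries.coeff_iterate_fslope, zero_add]
  exact (smul_eq_zero.mp hcoeff).resolve_left (by exact_mod_cast k.factorial_ne_zero)

lemma exists_differentiableOn_eq_pow_smul {E : Type*} [NormedAddCommGroup E] [NormedSpace ℂ E]
    [CompleteSpace E] {g : ℂ → E} {s : Set ℂ} {c : ℂ} (hs : s ∈ 𝓝 c)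
    (hg : DifferentiableOn ℂ g s) {n : ℕ} (h : ∀ k < n, iteratedDeriv k g c = 0) :
    ∃ φ : ℂ → E, DifferentiableOn ℂ φ s ∧ ∀ z, g z = (z - c) ^ n • φ z := by
  refine ⟨(swap dslope c)^[n] g, ?_, fun z ↦ ?_⟩
  · induction n with
    | zero => exact hg
    | succ n ih =>
      rw [iterate_succ_apply']
      exact (Complex.differentiableOn_dslope hs).mpr (ih fun k hk ↦ h k (by omega))
  · exact (pow_sub_smul_iterate_dslope_of_zero n
      (fun k hk ↦ iterate_dslope_apply_self_eq_zero (hg.analyticAt hs) h hk) z).symm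

noncomputable def mobius (a z : ℂ) : ℂ := (z + a) / (1 + conj a * z)

lemma mobius_apply_zero (a : ℂ) : mobius a 0 = a := by simp [mobius]

lemma mobius_neg_apply_self (b : ℂ) : mobius (-b) b = 0 := by simp [mobius]

lemma norm_add_sq_eq (a z : ℂ) :
    ‖z + a‖ ^ 2 = ‖1 + conj a * z‖ ^ 2 - (1 - ‖a‖ ^ 2) * (1 - ‖z‖ ^ 2) := by
  simp only [Complex.sq_norm, normSq_apply, add_re, add_im, mul_re, mul_im, one_re, one_im,
    conj_re, conj_im]
  ring

lemma one_add_conj_mul_ne_zero {a z : ℂ} (ha : ‖a‖ < 1) (hz : ‖z‖ ≤ 1) :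
    1 + conj a * z ≠ 0 := by
  intro h
  have : ‖conj a * z‖ < 1 := by
    rw [norm_mul, Complex.norm_conj]
    nlinarith [norm_nonneg a, norm_nonneg z]
  rw [← neg_eq_of_add_eq_zero_right h, norm_neg, norm_one] at this
  exact lt_irrefl _ this

lemma norm_mobius_le_one {a z : ℂ} (ha : ‖a‖ < 1) (hz : ‖z‖ ≤ 1) : ‖mobius a z‖ ≤ 1 := by
  rw [mobius, norm_div, div_le_one (norm_pos_iff.mpr (one_add_conj_mul_ne_zero ha hz)),
    ← sq_le_sq₀ (norm_nonneg _) (norm_nonneg _), norm_add_sq_eq]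
  have ha' : 0 ≤ 1 - ‖a‖ ^ 2 := by nlinarith [norm_nonneg a]
  have hz' : 0 ≤ 1 - ‖z‖ ^ 2 := by nlinarith [norm_nonneg z]
  linarith [mul_nonneg ha' hz']

lemma mapsTo_mobius_ball {a : ℂ} (ha : ‖a‖ < 1) : MapsTo (mobius a) (ball 0 1) (ball 0 1) := by
  intro z hz
  rw [mem_ball_zero_iff] at hz ⊢
  rw [mobius, norm_div, div_lt_one (norm_pos_iff.mpr (one_add_conj_mul_ne_zero ha hz.le)),
    ← sq_lt_sq₀ (norm_nonneg _) (norm_nonneg _), norm_add_sq_eq]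
  have ha' : 0 < 1 - ‖a‖ ^ 2 := by nlinarith [norm_nonneg a]
  have hz' : 0 < 1 - ‖z‖ ^ 2 := by nlinarith [norm_nonneg z]
  linarith [mul_pos ha' hz']

lemma hasDerivAt_mobius {a z : ℂ} (h : 1 + conj a * z ≠ 0) :
    HasDerivAt (mobius a) ((1 - conj a * a) / (1 + conj a * z) ^ 2) z := by
  have := ((hasDerivAt_id' z).add_const a).div
    (((hasDerivAt_id' z).const_mul (conj a)).const_add 1) h
  exact this.congr_deriv (by ring)

lemma norm_one_sub_conj_mul_self {c : ℂ} (hc : ‖c‖ ≤ 1) : ‖1 - conj c * c‖ = 1 - ‖c‖ ^ 2 := by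
  rw [conj_mul', ← ofReal_pow, ← ofReal_one, ← ofReal_sub, norm_real, Real.norm_eq_abs,
    abs_of_nonneg (by nlinarith [norm_nonneg c])]

lemma deriv_eq_zero_of_isMaxOn_norm {E : Type*} [NormedAddCommGroup E] [NormedSpace ℂ E]
    [StrictConvexSpace ℝ E]
    {ψ : ℂ → E} {U : Set ℂ} (hU : IsOpen U) (hψ : DifferentiableOn ℂ ψ U) {a : ℂ} (ha : a ∈ U)
    (hmax : IsMaxOn (norm ∘ ψ) U a) : deriv ψ a = 0 := by
  have hconst : ψ =ᶠ[𝓝 a] fun _ ↦ ψ a := Complex.eventually_eq_of_isLocalMax_norm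
    (eventually_of_mem (hU.mem_nhds ha) fun z hz ↦ hψ.differentiableAt (hU.mem_nhds hz))
    (hmax.isLocalMax (hU.mem_nhds ha))
  rw [hconst.deriv_eq, deriv_const]

theorem norm_deriv_mul_le_of_mapsTo_ball {ψ : ℂ → ℂ} (hψ : DifferentiableOn ℂ ψ (ball 0 1))
    (hmaps : MapsTo ψ (ball 0 1) (closedBall 0 1)) {a : ℂ} (ha : a ∈ ball 0 1) :
    ‖deriv ψ a‖ * (1 - ‖a‖ ^ 2) ≤ 1 - ‖ψ a‖ ^ 2 := by
  have ha1 : ‖a‖ < 1 := mem_ball_zero_iff.mp ha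
  have hψ_le (z : ℂ) (hz : z ∈ ball 0 1) : ‖ψ z‖ ≤ 1 := mem_closedBall_zero_iff.mp (hmaps hz)
  rcases (hψ_le a ha).lt_or_eq with hb | hb
  swap
  · rw [deriv_eq_zero_of_isMaxOn_norm isOpen_ball hψ ha fun z hz ↦ (hψ_le z hz).trans hb.ge, hb]
    simp
  set b := ψ a
  -- Schwarz lemma for `g = mobius (-b) ∘ ψ ∘ mobius a`, which fixes `0`
  set g := mobius (-b) ∘ ψ ∘ mobius a
  have hb' : ‖-b‖ < 1 := by rwa [norm_neg]
  have hM := mapsTo_mobius_ball ha1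
  have hN (w : ℂ) (hw : ‖w‖ ≤ 1) : HasDerivAt (mobius (-b))
      ((1 - conj (-b) * -b) / (1 + conj (-b) * w) ^ 2) w :=
    hasDerivAt_mobius (one_add_conj_mul_ne_zero hb' hw)
  have hg0 : g 0 = 0 := by simp [g, mobius_apply_zero, b, mobius_neg_apply_self]
  have hg_diff : DifferentiableOn ℂ g (ball 0 1) := by
    intro z hz
    have hMz := (hasDerivAt_mobius (one_add_conj_mul_ne_zero ha1
      (mem_ball_zero_iff.mp hz).le)).differentiableAt
    have hψz := hψ.differentiableAt (isOpen_ball.mem_nhds (hM hz))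
    exact ((hN _ (hψ_le _ (hM hz))).differentiableAt.comp z
      (hψz.comp z hMz)).differentiableWithinAt
  have hg_maps : MapsTo g (ball 0 1) (closedBall (g 0) 1) := fun z hz ↦ by
    rw [hg0, mem_closedBall_zero_iff]
    exact norm_mobius_le_one hb' (hψ_le _ (hM hz))
  have hschwarz := Complex.norm_deriv_le_one_of_mapsTo_ball hg_diff hg_maps one_pos
  have hb0 : 0 < 1 - ‖b‖ ^ 2 := by nlinarith [norm_nonneg b]
  have hderiv : deriv g 0 = deriv ψ a * (1 - conj a * a) / (1 - conj b * b) := by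
    have hMa : HasDerivAt (ψ ∘ mobius a) (deriv ψ a * (1 - conj a * a)) 0 := by
      have hψa : HasDerivAt ψ (deriv ψ a) (mobius a 0) := by
        rw [mobius_apply_zero]
        exact (hψ.differentiableAt (isOpen_ball.mem_nhds ha)).hasDerivAt
      simpa using hψa.comp 0 (hasDerivAt_mobius (a := a) (z := 0) (by simp))
    rw [(HasDerivAt.comp_of_eq 0 (hN b (hψ_le a ha)) hMa (by simp [b, mobius_apply_zero])).deriv]
    have : 1 - conj b * b ≠ 0 := norm_pos_iff.mp (norm_one_sub_conj_mul_self hb.le ▸ hb0)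
    simp only [map_neg, neg_mul, ← sub_eq_add_neg]
    field_simp
  rwa [hderiv, norm_div, norm_mul, norm_one_sub_conj_mul_self hb.le,
    norm_one_sub_conj_mul_self ha1.le, div_le_one hb0] at hschwarz

lemma norm_le_one_of_forall_norm_pow_smul_le_one {E : Type*} [NormedAddCommGroup E]
    [NormedSpace ℂ E] {ψ : ℂ → E} (hψ : DifferentiableOn ℂ ψ (ball 0 1)) {n : ℕ}
    (h : ∀ z ∈ ball (0 : ℂ) 1, ‖z ^ n • ψ z‖ ≤ 1) {a : ℂ} (ha : a ∈ ball 0 1) : ‖ψ a‖ ≤ 1 := by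
  have ha1 : ‖a‖ < 1 := mem_ball_zero_iff.mp ha
  -- maximum modulus on `ball 0 r`, then `r → 1`
  have hr (r : ℝ) (hr : r ∈ Ioo ‖a‖ 1) : ‖ψ a‖ ≤ 1 / r ^ n := by
    have hr0 : 0 < r := (norm_nonneg a).trans_lt hr.1
    refine Complex.norm_le_of_forall_mem_frontier_norm_le isBounded_ball
      (hψ.diffContOnCl_ball (closedBall_subset_ball hr.2)) (fun w hw ↦ ?_)
      (subset_closure (mem_ball_zero_iff.mpr hr.1))
    have hw : ‖w‖ = r := mem_sphere_zero_iff_norm.mp (frontier_ball_subset_sphere hw)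
    have := h w (mem_ball_zero_iff.mpr (hw ▸ hr.2))
    rw [norm_smul, norm_pow, hw] at this
    rw [le_div_iff₀ (by positivity)]
    linarith
  have hlim : Tendsto (fun r : ℝ ↦ 1 / r ^ n) (𝓝[<] 1) (𝓝 1) := by
    have : ContinuousAt (fun r : ℝ ↦ 1 / r ^ n) 1 := by fun_prop (disch := norm_num)
    simpa using this.tendsto.mono_left nhdsWithin_le_nhds
  exact ge_of_tendsto hlim (eventually_of_mem (Ioo_mem_nhdsLT ha1) hr)

lemma add_one_ne_zero_of_re_pos {w : ℂ} (hw : 0 < w.re) : w + 1 ≠ 0 := fun h ↦ by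
  have := congrArg re h
  simp only [add_re, one_re, zero_re] at this
  linarith

lemma norm_sub_one_div_add_one_lt_one {w : ℂ} (hw : 0 < w.re) : ‖(w - 1) / (w + 1)‖ < 1 := by
  rw [norm_div, div_lt_one (norm_pos_iff.mpr (add_one_ne_zero_of_re_pos hw)),
    ← sq_lt_sq₀ (norm_nonneg _) (norm_nonneg _), Complex.sq_norm, Complex.sq_norm, normSq_apply,
    normSq_apply]
  simp only [sub_re, add_re, sub_im, add_im, one_re, one_im]
  nlinarith

lemma logDeriv_one_add_div_one_sub {ω : ℂ → ℂ} {ω' z : ℂ} (hω : HasDerivAt ω ω' z)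
    (h1 : 1 - ω z ≠ 0) (h2 : 1 + ω z ≠ 0) :
    logDeriv (fun w ↦ (1 + ω w) / (1 - ω w)) z = 2 * ω' / (1 - ω z ^ 2) := by
  have hsq : 1 - ω z ^ 2 ≠ 0 := by
    rw [show 1 - ω z ^ 2 = (1 - ω z) * (1 + ω z) by ring]; exact mul_ne_zero h1 h2
  rw [logDeriv_apply, ((hω.const_add 1).fun_div (hω.const_sub 1) h1).deriv]
  field_simp
  ring

lemma norm_mul_two_mul_div_le {n : ℕ} (hn : 0 < n) {z w w' : ℂ} (hz : ‖z‖ < 1) (hw : ‖w‖ ≤ 1)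
    (hw' : ‖w'‖ * (1 - ‖z‖ ^ 2) ≤ 1 - ‖w‖ ^ 2) :
    ‖z * (2 * (n * z ^ (n - 1) * w + z ^ n * w') / (1 - (z ^ n * w) ^ 2))‖ ≤
      2 * n * ‖z‖ ^ n / (1 - ‖z‖ ^ (2 * n)) := by
  set r := ‖z‖
  have hnum :
      ‖z * (2 * (n * z ^ (n - 1) * w + z ^ n * w'))‖ ≤ 2 * r ^ n * (n * ‖w‖ + r * ‖w'‖) := by
    have : z * (2 * (n * z ^ (n - 1) * w + z ^ n * w')) = 2 * z ^ n * (n * w + z * w') := by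
      obtain ⟨m, rfl⟩ := Nat.exists_eq_add_of_lt hn
      simp only [zero_add, Nat.add_sub_cancel, pow_succ]
      ring
    rw [this, norm_mul, norm_mul, norm_pow, Complex.norm_two]
    gcongr
    refine (norm_add_le _ _).trans_eq ?_
    simp [r]
  have hO : ‖(z ^ n * w) ^ 2‖ = r ^ (2 * n) * ‖w‖ ^ 2 := by
    rw [norm_pow, norm_mul, norm_pow, mul_pow, ← pow_mul, mul_comm n 2]
  have hden : 1 - r ^ (2 * n) * ‖w‖ ^ 2 ≤ ‖1 - (z ^ n * w) ^ 2‖ := by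
    rw [← hO, ← norm_one (α := ℂ)]
    exact norm_sub_norm_le _ _
  have hden0 : 0 < 1 - r ^ (2 * n) * ‖w‖ ^ 2 := by
    have := pow_lt_one₀ (norm_nonneg z) hz (n := 2 * n) (by omega)
    nlinarith [pow_le_one₀ (norm_nonneg w) hw (n := 2), pow_nonneg (norm_nonneg z) (2 * n),
      sq_nonneg ‖w‖]
  calc _ ≤ 2 * r ^ n * (n * ‖w‖ + r * ‖w'‖) / (1 - r ^ (2 * n) * ‖w‖ ^ 2) := by
        rw [← mul_div_assoc, norm_div]
        exact div_le_div₀ (by positivity) hnum hden0 hden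
    _ = 2 * r ^ n * ((n * ‖w‖ + r * ‖w'‖) / (1 - r ^ (2 * n) * ‖w‖ ^ 2)) := by ring
    _ ≤ 2 * r ^ n * (n / (1 - r ^ (2 * n))) := mul_le_mul_of_nonneg_left
        (nat_mul_add_div_le_of_mul_one_sub_sq_le hn (norm_nonneg z) hz (norm_nonneg w) hw hw')
        (by positivity)
    _ = 2 * n * r ^ n / (1 - r ^ (2 * n)) := by ring

theorem norm_mul_logDeriv_le {n : ℕ} (hn : 0 < n) {φ : ℂ → ℂ}
    (hφ : DifferentiableOn ℂ φ (ball 0 1))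
    (hre : ∀ z ∈ ball (0 : ℂ) 1, 0 < (1 + z ^ n * φ z).re) {z : ℂ} (hz : z ∈ ball 0 1) :
    ‖z * logDeriv (fun w ↦ 1 + w ^ n * φ w) z‖ ≤ 2 * n * ‖z‖ ^ n / (1 - ‖z‖ ^ (2 * n)) := by
  set p := fun w ↦ 1 + w ^ n * φ w
  have hp1 (w : ℂ) (hw : w ∈ ball 0 1) : p w + 1 ≠ 0 := add_one_ne_zero_of_re_pos (hre w hw)
  set ψ := fun w ↦ φ w / (p w + 1)
  set ω := fun w ↦ w ^ n * ψ w
  have hψ : DifferentiableOn ℂ ψ (ball 0 1) :=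
    hφ.div (((differentiableOn_pow n).mul hφ).const_add 1 |>.add_const 1) hp1
  have hω (w : ℂ) (hw : w ∈ ball 0 1) : ω w = (p w - 1) / (p w + 1) := by
    simp only [ω, ψ, p]
    ring
  have hω_lt (w : ℂ) (hw : w ∈ ball 0 1) : ‖ω w‖ < 1 :=
    hω w hw ▸ norm_sub_one_div_add_one_lt_one (hre w hw)
  have hψ_le (w : ℂ) (hw : w ∈ ball 0 1) : ‖ψ w‖ ≤ 1 :=
    norm_le_one_of_forall_norm_pow_smul_le_one hψ (fun v hv ↦ (hω_lt v hv).le) hw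
  have hpick := norm_deriv_mul_le_of_mapsTo_ball hψ
    (fun w hw ↦ mem_closedBall_zero_iff.mpr (hψ_le w hw)) hz
  have hp_eq : p =ᶠ[𝓝 z] fun w ↦ (1 + ω w) / (1 - ω w) :=
    eventually_of_mem (isOpen_ball.mem_nhds hz) fun w hw ↦ by
      change p w = (1 + ω w) / (1 - ω w)
      rw [hω w hw]
      field_simp [hp1 w hw]
      ring
  have hωd : HasDerivAt ω (n * z ^ (n - 1) * ψ z + z ^ n * deriv ψ z) z :=
    (hasDerivAt_pow n z).mul (hψ.differentiableAt (isOpen_ball.mem_nhds hz)).hasDerivAt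
  have h1 : 1 - ω z ≠ 0 := fun h ↦ by
    simpa [← sub_eq_zero.mp h] using hω_lt z hz
  have h2 : 1 + ω z ≠ 0 := fun h ↦ by
    simpa [eq_neg_of_add_eq_zero_right h] using hω_lt z hz
  rw [(logDeriv_congr_nhds hp_eq).eq_of_nhds, logDeriv_one_add_div_one_sub hωd h1 h2]
  exact norm_mul_two_mul_div_le hn (mem_ball_zero_iff.mp hz) (hψ_le z hz) hpick

lemma unitDisk_eq_ball : unitDisk = ball (0 : ℂ) 1 := by
  ext z
  simp [unitDisk]

lemma classA.iteratedDeriv_sub_id_eq_zero {n : ℕ} {f : ℂ → ℂ} (hf : classA n f) :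
    ∀ k < n + 1, iteratedDeriv k (fun z ↦ f z - z) 0 = 0 := by
  obtain ⟨hfa, hf0, hf1, hfk⟩ := hf
  intro k hk
  have hfc := (hfa 0 (by simp [unitDisk])).contDiffAt (n := k)
  rw [iteratedDeriv_fun_sub hfc contDiffAt_fun_id, iteratedDeriv_fun_id_zero]
  rcases Nat.lt_or_ge k 2 with hk2 | hk2
  · interval_cases k <;> simp [hf0, hf1]
  · rw [hfk k hk2 (by omega), if_neg (by omega), sub_zero]

lemma classA.exists_eq_mul_one_add_pow_mul {n : ℕ} {f : ℂ → ℂ} (hf : classA n f) :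
    ∃ φ : ℂ → ℂ, DifferentiableOn ℂ φ (ball 0 1) ∧ ∀ z, f z = z * (1 + z ^ n * φ z) := by
  have hd : DifferentiableOn ℂ (fun z ↦ f z - z) (ball 0 1) :=
    (unitDisk_eq_ball ▸ hf.1.differentiableOn).sub differentiableOn_id
  obtain ⟨φ, hφ, hfφ⟩ := exists_differentiableOn_eq_pow_smul (ball_mem_nhds 0 one_pos) hd
    hf.iteratedDeriv_sub_id_eq_zero
  refine ⟨φ, hφ, fun z ↦ ?_⟩
  have := hfφ z
  simp only [sub_zero, smul_eq_mul] at this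
  linear_combination this

/-- `S*_{ρ,n}`-radius for the class `S_n = {f ∈ 𝒜_n : Re (f z / z) > 0}`:
for `|z| < (arcsinh 1 / (n + √(n² + (arcsinh 1)²)))^(1/n)`, one has
`z f'(z)/f(z) ∈ Ω_ρ`. -/
theorem radius_Sn (n : ℕ) (hn : 1 ≤ n) (f : ℂ → ℂ) (hf : classA n f)
    (hre : ∀ z ∈ unitDisk, z ≠ 0 → 0 < (f z / z).re) :
    ∀ z : ℂ, 0 < ‖z‖ →
      ‖z‖ <
        (Real.arsinh 1 / ((n : ℝ) + Real.sqrt ((n : ℝ) ^ 2 + Real.arsinh 1 ^ 2))) ^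
          ((1 : ℝ) / (n : ℝ)) →
      f z ≠ 0 ∧ z * deriv f z / f z ∈ OmegaRho := by
  intro z hz hzR
  obtain ⟨φ, hφ, hfφ⟩ := hf.exists_eq_mul_one_add_pow_mul
  set p := fun w ↦ 1 + w ^ n * φ w
  have hp_re : ∀ w ∈ ball (0 : ℂ) 1, 0 < (p w).re := by
    intro w hw
    rcases eq_or_ne w 0 with rfl | hw0
    · simp [p, zero_pow (by omega : n ≠ 0)]
    · have := hre w (unitDisk_eq_ball ▸ hw) hw0
      rwa [hfφ w, mul_div_cancel_left₀ _ hw0] at this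
  obtain ⟨hz1, hbound⟩ := lt_one_and_two_mul_pow_div_lt hn (Real.arsinh_pos_iff.mpr one_pos) hz hzR
  have hzD : z ∈ ball (0 : ℂ) 1 := mem_ball_zero_iff.mpr hz1
  have hpz : p z ≠ 0 := fun h ↦ by simpa [h] using hp_re z hzD
  have hz0 : z ≠ 0 := norm_pos_iff.mp hz
  have hf_eq : f = fun w ↦ w * p w := funext hfφ
  have hpd : DifferentiableAt ℂ p z :=
    ((differentiableAt_pow n).mul (hφ.differentiableAt (isOpen_ball.mem_nhds hzD))).const_add 1
  refine ⟨by rw [hfφ]; exact mul_ne_zero hz0 hpz, ?_⟩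
  have : z * deriv f z / f z = 1 + z * logDeriv p z := by
    rw [hf_eq, deriv_fun_mul differentiableAt_fun_id hpd, deriv_id'', logDeriv_apply]
    field_simp
  rw [this]
  exact one_add_mem_OmegaRho ((norm_mul_logDeriv_le hn hφ hp_re hzD).trans_lt hbound)
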